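/- arXiv:1910.05301 — 2 statements merged into one kernel-verified Lean document; each statement's English description precedes it below -/
import Mathlib

section
/- If f : ℝ³ → ℝ depends only on the second coordinate, f(t,x,v) = g(x), and f is Hölder continuous with respect to the intrinsic distance d_L (i.e. there exist C, α > 0 with |f(p) − f(q)| ≤ C d_L(p,q)^α for all p,q ∈ ℝ³), then g is constant. -/
/-- The Langevin group law `(τ,ξ,η) ∗ (t,x,v) = (t+τ, x+ξ+t·η, v+η)`. -/
def langevinMul (p q : ℝ × ℝ × ℝ) : ℝ × ℝ × ℝ :=
  (q.1 + p.1, q.2.1 + p.2.1 + q.1 * p.2.2, q.2.2 + p.2.2)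

/-- The group inverse `(τ,ξ,η)⁻¹ = (−τ, −ξ+τη, −η)`. -/
def langevinInv (p : ℝ × ℝ × ℝ) : ℝ × ℝ × ℝ :=
  (-p.1, -p.2.1 + p.1 * p.2.2, -p.2.2)

/-- The homogeneous norm `|(t,x,v)|_L = |t|^{1/2} + |x|^{1/3} + |v|`. -/
noncomputable def langevinNorm (p : ℝ × ℝ × ℝ) : ℝ :=
  |p.1| ^ ((1:ℝ)/2) + |p.2.1| ^ ((1:ℝ)/3) + |p.2.2|

/-- The intrinsic distance `d_L(p,q) = |q⁻¹ ∗ p|_L`. -/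
noncomputable def langevinDist (p q : ℝ × ℝ × ℝ) : ℝ :=
  langevinNorm (langevinMul (langevinInv q) p)

/-!
Two points with the same velocity `v` whose positions differ by `(t - τ) v` lie on one
trajectory of the transport `∂ₜ + v ∂ₓ`, and their intrinsic distance is only `|t - τ|^{1/2}`.
Any two positions `x, y` are joined this way in time `ε` using the velocity `(x - y)/ε`, so
Hölder continuity gives `|g x - g y| ≤ C ε^{α/2}` for every `ε > 0`.
-/

open Filter Topology

theorem langevinDist_of_sub_eq_mul {t τ x ξ v : ℝ} (h : x - ξ = (t - τ) * v) :
    langevinDist (t, x, v) (τ, ξ, v) = |t - τ| ^ (1 / 2 : ℝ) := by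
  have hx : x + (-ξ + τ * v) + t * -v = 0 := by linarith
  simp only [langevinDist, langevinMul, langevinInv, langevinNorm, hx, add_neg_cancel, abs_zero,
    ← sub_eq_add_neg]
  rw [Real.zero_rpow (by norm_num)]
  ring

theorem eq_zero_of_abs_le_mul_rpow {a C β : ℝ} (hβ : 0 < β)
    (h : ∀ ε > 0, |a| ≤ C * ε ^ β) : a = 0 := by
  have hlim : Tendsto (fun ε : ℝ => C * ε ^ β) (𝓝[>] 0) (𝓝 0) := by
    have := (Real.continuousAt_rpow_const 0 β (Or.inr hβ.le)).tendsto.const_mul C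
    rw [Real.zero_rpow hβ.ne', mul_zero] at this
    exact this.mono_left nhdsWithin_le_nhds
  have : |a| ≤ 0 := ge_of_tendsto hlim (eventually_nhdsWithin_of_forall fun ε hε => h ε hε)
  exact abs_nonpos_iff.mp this

theorem intrinsic_holder_only_x_implies_constant_general
    (f : ℝ × ℝ × ℝ → ℝ) (g : ℝ → ℝ)
    (hfg : ∀ t x v : ℝ, f (t, x, v) = g x)
    (C α : ℝ) (hα : 0 < α)
    (hHolder : ∀ p q : ℝ × ℝ × ℝ, |f p - f q| ≤ C * (langevinDist p q) ^ α) :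
    ∀ x y : ℝ, g x = g y := by
  intro x y
  have hbound : ∀ ε > 0, |g x - g y| ≤ C * ε ^ (1 / 2 * α) := by
    intro ε hε
    have hd := langevinDist_of_sub_eq_mul (t := ε) (τ := 0) (x := x) (ξ := y)
      (v := (x - y) / ε) (by field_simp; ring)
    have := hHolder (ε, x, (x - y) / ε) (0, y, (x - y) / ε)
    rwa [hfg, hfg, hd, sub_zero, abs_of_pos hε, ← Real.rpow_mul hε.le] at this
  exact sub_eq_zero.mp (eq_zero_of_abs_le_mul_rpow (by positivity) hbound)

/-- A function on ℝ³ depending only on the second coordinate that is Hölder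
continuous with respect to the intrinsic distance `d_L` must be constant. -/
theorem intrinsic_holder_only_x_implies_constant
    (f : ℝ × ℝ × ℝ → ℝ) (g : ℝ → ℝ)
    (hfg : ∀ t x v : ℝ, f (t, x, v) = g x)
    (C α : ℝ) (hC : 0 < C) (hα : 0 < α)
    (hHolder : ∀ p q : ℝ × ℝ × ℝ, |f p - f q| ≤ C * (langevinDist p q) ^ α) :
    ∀ x y : ℝ, g x = g y :=
  intrinsic_holder_only_x_implies_constant_general f g hfg C α hα hHolder
end

section
/- Let M_t ∈ U_λ for t ∈ [0,1], i.e. 2×2 matrices with entries bounded by λ and (1,2)-entry in [λ⁻¹, λ], let E_{t,ρ} be the associated resolvent (∂_t E_{t,ρ} = M_t E_{t,ρ}, E_{ρ,ρ} = Id), and A = ∫₀¹ (E_{1,ρ} e₂)(E_{1,ρ} e₂)ᵀ dρ. If ⟨A ζ, ζ⟩ = 0 for some ζ ∈ ℝ², then ζ = 0; i.e. A is positive definite. -/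
/-!
Put `w = E_{1,0}ᵀ ζ`. By the semigroup law `E_{1,ρ} = E_{1,0} E_{0,ρ}`, the quadratic form is
`⟨Aζ, ζ⟩ = ∫₀¹ ((wᵀ E_{0,ρ})₂)² dρ`, so `(wᵀ E_{0,ρ})₂` vanishes on `[0, 1]`. For `2 × 2`
matrices this says that `g(ρ) = E_{ρ,0} (w₂, -w₁)` has vanishing first coordinate. Since
`g' = M g` and `(M_ρ)₁₂ ≥ λ⁻¹ > 0`, its second coordinate vanishes as well, so `g = 0`, whence
`w = 0` and `ζ = 0`. The semigroup law is uniqueness for the linear ODE `x' = M x`, whose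
right-hand side is uniformly Lipschitz because the entries of `M` are bounded.
-/

open Matrix Set Filter Topology NNReal MeasureTheory

lemma Matrix.lipschitzWith_mulVec {m n : Type*} [Fintype m] [Fintype n] {M : Matrix m n ℝ}
    {C : ℝ≥0} (hM : ∀ i j, ‖M i j‖₊ ≤ C) : LipschitzWith (Fintype.card n * C) (M *ᵥ ·) := by
  refine AddMonoidHomClass.lipschitz_of_bound_nnnorm M.mulVecLin _ fun x => ?_
  refine (pi_nnnorm_le_iff (x := M *ᵥ x)).2 fun i => ?_
  calc ‖(M *ᵥ x) i‖₊ ≤ ∑ j, ‖M i j‖₊ * ‖x j‖₊ := by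
        simpa only [mulVec, dotProduct, nnnorm_mul]
          using nnnorm_sum_le Finset.univ fun j => M i j * x j
    _ ≤ ∑ _j : n, C * ‖x‖₊ := by gcongr with j; exacts [hM i j, nnnorm_le_pi_nnnorm x j]
    _ = Fintype.card n * C * ‖x‖₊ := by simp [mul_assoc]

lemma Matrix.eq_of_hasDerivAt_mulVec {n : Type*} [Fintype n] {M : ℝ → Matrix n n ℝ} {C : ℝ≥0}
    (hM : ∀ t i j, ‖M t i j‖₊ ≤ C) {x y : ℝ → n → ℝ}
    (hx : ∀ t, HasDerivAt x (M t *ᵥ x t) t) (hy : ∀ t, HasDerivAt y (M t *ᵥ y t) t)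
    {t₀ : ℝ} (h : x t₀ = y t₀) : x = y :=
  ODE_solution_unique_univ (s := fun _ => univ)
    (fun t => (lipschitzWith_mulVec (hM t)).lipschitzOnWith)
    (fun t => ⟨hx t, trivial⟩) (fun t => ⟨hy t, trivial⟩) h

structure IsResolvent {n : Type*} [Fintype n] [DecidableEq n] (M : ℝ → Matrix n n ℝ)
    (E : ℝ → ℝ → Matrix n n ℝ) : Prop where
  apply_self : ∀ ρ, E ρ ρ = 1
  hasDerivAt : ∀ ρ t i j, HasDerivAt (fun τ => E τ ρ i j) ((M t * E t ρ) i j) t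

namespace IsResolvent

variable {n : Type*} [Fintype n] [DecidableEq n] {M : ℝ → Matrix n n ℝ}
  {E : ℝ → ℝ → Matrix n n ℝ}

lemma hasDerivAt_mulVec (hE : IsResolvent M E) (ρ : ℝ) (v : n → ℝ) (t : ℝ) :
    HasDerivAt (fun τ => E τ ρ *ᵥ v) (M t *ᵥ (E t ρ *ᵥ v)) t := by
  rw [mulVec_mulVec]
  refine hasDerivAt_pi.2 fun i => ?_
  simp only [mulVec, dotProduct]
  exact HasDerivAt.fun_sum fun j _ => (hE.hasDerivAt ρ t i j).mul_const (v j)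

lemma continuous_finalTime (hE : IsResolvent M E) (ρ : ℝ) : Continuous fun t => E t ρ :=
  continuous_matrix fun i j => continuous_iff_continuousAt.2 fun t =>
    (hE.hasDerivAt ρ t i j).continuousAt

lemma mul_eq {C : ℝ≥0} (hE : IsResolvent M E) (hM : ∀ t i j, ‖M t i j‖₊ ≤ C) (t ρ σ : ℝ) :
    E t ρ * E ρ σ = E t σ := by
  refine ext_of_mulVec_single fun j => ?_
  have hcol := eq_of_hasDerivAt_mulVec hM (t₀ := ρ)
    (hE.hasDerivAt_mulVec ρ (E ρ σ *ᵥ Pi.single j 1)) (hE.hasDerivAt_mulVec σ (Pi.single j 1))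
    (by simp [hE.apply_self])
  simpa only [mulVec_mulVec] using congrFun hcol t

lemma continuous_initialTime {C : ℝ≥0} (hE : IsResolvent M E) (hM : ∀ t i j, ‖M t i j‖₊ ≤ C)
    (t : ℝ) : Continuous fun ρ => E t ρ := by
  have hleft : ∀ ρ, E 0 ρ * E ρ 0 = 1 := fun ρ => (hE.mul_eq hM 0 ρ 0).trans (hE.apply_self 0)
  have hfactor : (fun ρ => E t ρ) = fun ρ => E t 0 * (E ρ 0)⁻¹ := funext fun ρ => by
    rw [inv_eq_left_inv (hleft ρ), hE.mul_eq hM]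
  rw [hfactor]
  refine continuous_const.mul (continuous_iff_continuousAt.2 fun ρ => ?_)
  refine (continuousAt_matrix_inv _ ?_).comp (hE.continuous_finalTime 0).continuousAt
  rw [Ring.inverse_eq_inv']
  exact continuousAt_inv₀ (det_ne_zero_of_left_inverse (hleft ρ))

end IsResolvent

lemma Matrix.mulVec_dotProduct_self_eq_integral_sq {n : Type*} [Fintype n] {u : ℝ → n → ℝ}
    (hu : Continuous u) {a b : ℝ} {A : Matrix n n ℝ}
    (hA : ∀ i j, A i j = ∫ ρ in a..b, u ρ i * u ρ j) (ζ : n → ℝ) :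
    A *ᵥ ζ ⬝ᵥ ζ = ∫ ρ in a..b, (u ρ ⬝ᵥ ζ) ^ 2 := by
  have hint : ∀ i j, IntervalIntegrable (fun ρ => u ρ i * ζ i * (u ρ j * ζ j)) volume a b :=
    fun i j => (by fun_prop : Continuous _).intervalIntegrable a b
  simp_rw [sq, dotProduct, Finset.sum_mul_sum]
  rw [intervalIntegral.integral_finsetSum fun i _ => ?_]
  · refine Finset.sum_congr rfl fun i _ => ?_
    rw [mulVec, dotProduct, Finset.sum_mul,
      intervalIntegral.integral_finsetSum fun j _ => hint i j]
    refine Finset.sum_congr rfl fun j _ => ?_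
    rw [hA, ← intervalIntegral.integral_mul_const, ← intervalIntegral.integral_mul_const]
    congr 1 with ρ
    ring
  · exact (by fun_prop : Continuous _).intervalIntegrable a b

lemma eqOn_zero_of_integral_sq_eq_zero {f : ℝ → ℝ} {a b : ℝ} (hab : a < b)
    (hf : ContinuousOn f (Icc a b)) (h : ∫ x in a..b, f x ^ 2 = 0) : EqOn f 0 (Icc a b) := by
  intro c hc
  by_contra hfc
  exact (intervalIntegral.integral_pos hab (hf.pow 2) (fun x _ => sq_nonneg (f x))
    ⟨c, hc, sq_pos_of_ne_zero hfc⟩).ne' h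

/-- For `G = F⁻¹` one has `(w ᵥ* G) 1 = (F *ᵥ ![w 1, -w 0]) 0 / det F`. -/
lemma Matrix.mulVec_rot_apply_zero_eq_zero {R : Type*} [CommRing R]
    {F G : Matrix (Fin 2) (Fin 2) R} (hGF : G * F = 1) {w : Fin 2 → R} (hw : (w ᵥ* G) 1 = 0) :
    (F *ᵥ ![w 1, -w 0]) 0 = 0 := by
  set y := w ᵥ* G
  have hy : w = y ᵥ* F := by rw [vecMul_vecMul, hGF, vecMul_one]
  clear_value y
  subst hy
  simp [vecMul, mulVec, dotProduct, Fin.sum_univ_two, hw]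
  ring

lemma eq_zero_of_hasDerivAt_mulVec_of_eventually_apply_zero {M : Matrix (Fin 2) (Fin 2) ℝ}
    {g : ℝ → Fin 2 → ℝ} {t₀ : ℝ} (hM : M 0 1 ≠ 0) (hg : HasDerivAt g (M *ᵥ g t₀) t₀)
    (h0 : ∀ᶠ t in 𝓝 t₀, g t 0 = 0) : g t₀ = 0 := by
  have hg₀ : g t₀ 0 = 0 := h0.self_of_nhds
  have hderiv : (M *ᵥ g t₀) 0 = 0 :=
    (hasDerivAt_pi.1 hg 0).unique ((hasDerivAt_const t₀ 0).congr_of_eventuallyEq h0)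
  have hg₁ : M 0 1 * g t₀ 1 = 0 := by
    simpa [mulVec, dotProduct, Fin.sum_univ_two, hg₀] using hderiv
  ext i
  fin_cases i
  exacts [hg₀, (mul_eq_zero.1 hg₁).resolve_left hM]

/-- Nondegeneracy of the Kolmogorov-type Gramian: if `M_t` has entries bounded
by `λ` and `(1,2)`-entry in `[λ⁻¹, λ]`, `E_{t,ρ}` is the associated resolvent
and `A = ∫₀¹ (E_{1,ρ}e₂)(E_{1,ρ}e₂)ᵀ dρ`, then `⟨Aζ,ζ⟩ = 0` forces `ζ = 0`. -/
theorem gramian_posDef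
    (lam : ℝ) (hlam : 0 < lam)
    (M : ℝ → Matrix (Fin 2) (Fin 2) ℝ)
    (hbdd : ∀ t : ℝ, ∀ i j : Fin 2, |M t i j| ≤ lam)
    (h12 : ∀ t : ℝ, lam⁻¹ ≤ M t 0 1 ∧ M t 0 1 ≤ lam)
    (E : ℝ → ℝ → Matrix (Fin 2) (Fin 2) ℝ)
    (hinit : ∀ ρ : ℝ, E ρ ρ = 1)
    (hderiv : ∀ ρ t : ℝ, ∀ i j : Fin 2,
      HasDerivAt (fun τ => E τ ρ i j) ((M t * E t ρ) i j) t)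
    (A : Matrix (Fin 2) (Fin 2) ℝ)
    (hA : ∀ i j : Fin 2,
      A i j = ∫ ρ in (0:ℝ)..1,
        ((E 1 ρ).mulVec ![0, 1] i) * ((E 1 ρ).mulVec ![0, 1] j)) :
    ∀ ζ : Fin 2 → ℝ, (A.mulVec ζ) ⬝ᵥ ζ = 0 → ζ = 0 := by
  intro ζ hζ
  have hE : IsResolvent M E := ⟨hinit, hderiv⟩
  have hM : ∀ t i j, ‖M t i j‖₊ ≤ lam.toNNReal := fun t i j => by
    rw [← NNReal.coe_le_coe, coe_nnnorm, Real.norm_eq_abs, Real.coe_toNNReal _ hlam.le]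
    exact hbdd t i j
  have hinv : ∀ t ρ, E t ρ * E ρ t = 1 := fun t ρ => (hE.mul_eq hM t ρ t).trans (hinit t)
  have hcont : Continuous fun ρ => E 1 ρ *ᵥ ![0, 1] :=
    (hE.continuous_initialTime hM 1).matrix_mulVec continuous_const
  have hquad : ∀ ρ ∈ Icc (0 : ℝ) 1, E 1 ρ *ᵥ ![0, 1] ⬝ᵥ ζ = 0 :=
    eqOn_zero_of_integral_sq_eq_zero one_pos (hcont.dotProduct continuous_const).continuousOn
      ((mulVec_dotProduct_self_eq_integral_sq hcont hA ζ).symm.trans hζ)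
  set w := ζ ᵥ* E 1 0
  set x : Fin 2 → ℝ := ![w 1, -w 0]
  have hx0 : ∀ ρ ∈ Icc (0 : ℝ) 1, (E ρ 0 *ᵥ x) 0 = 0 := fun ρ hρ => by
    refine mulVec_rot_apply_zero_eq_zero (hinv 0 ρ) ?_
    have := hquad ρ hρ
    rw [← hE.mul_eq hM 1 0 ρ, dotProduct_comm, dotProduct_mulVec, ← vecMul_vecMul] at this
    simpa only [dotProduct, Fin.sum_univ_two, Matrix.cons_val_zero, Matrix.cons_val_one,
      mul_zero, mul_one, zero_add] using this
  have hx : x = 0 := by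
    have := eq_zero_of_hasDerivAt_mulVec_of_eventually_apply_zero
      ((inv_pos.2 hlam).trans_le (h12 _).1).ne' (hE.hasDerivAt_mulVec 0 x (1 / 2))
      (eventually_of_mem (Icc_mem_nhds (by norm_num) (by norm_num)) hx0)
    rw [← one_mulVec x, ← hinv 0 (1 / 2), ← mulVec_mulVec, this, mulVec_zero]
  have hw : w = 0 := by
    ext i
    fin_cases i
    · simpa [x] using congrFun hx 1
    · simpa [x] using congrFun hx 0
  rw [← vecMul_one ζ, ← hinv 1 0, ← vecMul_vecMul]
  show w ᵥ* E 0 1 = 0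
  rw [hw, zero_vecMul]
end
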